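/- arXiv:1507.01768 — 2 statements merged into one kernel-verified Lean document; each statement's English description precedes it below -/
import Mathlib

section
/- Let X_1,...,X_N be i.i.d. real random variables taking values in [-a,a] with E[X_i] = μ and E[|X_i|] = μ̃, and let X̄ = (1/N)·∑X_i. Then there exists a universal constant C > 0 such that for every 0 < ε' ≤ 1/2 and every α > 0, the probability that |X̄ - μ| ≤ ε'·μ̃ + α is at least 1 - 4·exp(-C·N·α·ε'/a). -/
/-!
If `|X| ≤ a` then `X² ≤ a |X|`, so for `|t| a ≤ 1` the inequality `eᵘ ≤ 1 + u + u²` (valid for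
`|u| ≤ 1`) gives the Bernstein-type bound `E[e^{tX}] ≤ exp (t E[X] + t² a E[|X|])`, whose variance
proxy is `a E[|X|]` instead of `a²`. For a sum of `N` independent copies, the Chernoff bound at
`t = ε' / (2a)` and deviation `N (ε' E[|X|] + α)` then makes each tail at most
`exp (-N α ε' / (2a))`.
-/

open MeasureTheory ProbabilityTheory Real

lemma Real.exp_mul_le_of_abs_le {a t x : ℝ} (hx : |x| ≤ a) (ht : |t| * a ≤ 1) :
    exp (t * x) ≤ 1 + t * x + t ^ 2 * (a * |x|) := by
  have htx : |t * x| ≤ 1 := by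
    rw [abs_mul]; exact (by gcongr : |t| * |x| ≤ |t| * a).trans ht
  have hsq : (t * x) ^ 2 ≤ t ^ 2 * (a * |x|) := by
    rw [mul_pow, ← sq_abs x, sq |x|]; gcongr
  linarith [(abs_le.mp (abs_exp_sub_one_sub_id_le htx)).2]

namespace ProbabilityTheory

variable {Ω ι : Type*} {m : MeasurableSpace Ω} {P : Measure Ω} {X : Ω → ℝ} {a t : ℝ}

lemma integrable_exp_mul_of_ae_abs_le [IsFiniteMeasure P] (hX : AEMeasurable X P)
    (hb : ∀ᵐ ω ∂P, |X ω| ≤ a) (t : ℝ) : Integrable (fun ω => exp (t * X ω)) P := by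
  refine .of_bound (hX.const_mul t).exp.aestronglyMeasurable (exp (|t| * a)) ?_
  filter_upwards [hb] with ω hω
  rw [norm_of_nonneg (exp_pos _).le, exp_le_exp]
  calc t * X ω ≤ |t| * |X ω| := abs_mul t (X ω) ▸ le_abs_self _
    _ ≤ |t| * a := by gcongr

lemma mgf_le_exp_of_abs_le [IsProbabilityMeasure P] (hX : AEMeasurable X P)
    (hb : ∀ᵐ ω ∂P, |X ω| ≤ a) (ht : |t| * a ≤ 1) :
    mgf X P t ≤ exp (t * P[X] + t ^ 2 * (a * ∫ ω, |X ω| ∂P)) := by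
  have hXi : Integrable X P := .of_bound hX.aestronglyMeasurable a hb
  have hlin : Integrable (fun ω => 1 + t * X ω) P := (integrable_const 1).add (hXi.const_mul t)
  have hquad : Integrable (fun ω => t ^ 2 * (a * |X ω|)) P := (hXi.abs.const_mul a).const_mul _
  calc mgf X P t ≤ ∫ ω, (1 + t * X ω + t ^ 2 * (a * |X ω|)) ∂P :=
        integral_mono_of_nonneg (.of_forall fun ω => (exp_pos _).le) (hlin.add hquad)
          (hb.mono fun ω hω => exp_mul_le_of_abs_le hω ht)
    _ = 1 + (t * P[X] + t ^ 2 * (a * ∫ ω, |X ω| ∂P)) := by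
        rw [integral_add hlin hquad, integral_add (integrable_const 1) (hXi.const_mul t),
          integral_const_mul, integral_const_mul, integral_const_mul]
        simp [add_assoc]
    _ ≤ exp (t * P[X] + t ^ 2 * (a * ∫ ω, |X ω| ∂P)) := by rw [add_comm]; exact add_one_le_exp _

variable [Fintype ι] {X : ι → Ω → ℝ}

lemma iIndepFun.mgf_sum_le_exp_of_abs_le (hindep : iIndepFun X P)
    (hX : ∀ i, AEMeasurable (X i) P) (hb : ∀ i, ∀ᵐ ω ∂P, |X i ω| ≤ a) (ht : |t| * a ≤ 1) :
    mgf (∑ i, X i) P t ≤ exp (∑ i, (t * P[X i] + t ^ 2 * (a * ∫ ω, |X i ω| ∂P))) := by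
  have := hindep.isProbabilityMeasure
  rw [hindep.mgf_sum₀ hX, exp_sum]
  exact Finset.prod_le_prod (fun i _ => mgf_nonneg) fun i _ => mgf_le_exp_of_abs_le (hX i) (hb i) ht

lemma iIndepFun.measureReal_sum_sub_integral_ge_le (hindep : iIndepFun X P)
    (hX : ∀ i, AEMeasurable (X i) P) (hb : ∀ i, ∀ᵐ ω ∂P, |X i ω| ≤ a) (ε : ℝ) {s : ℝ}
    (hs : 0 ≤ s) (hsa : s * a ≤ 1) :
    P.real {ω | ε ≤ ∑ i, (X i ω - P[X i])} ≤ exp (-s * ε + s ^ 2 * (a * ∑ i, ∫ ω, |X i ω| ∂P)) := by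
  have := hindep.isProbabilityMeasure
  have hsum : ∀ᵐ ω ∂P, |(∑ i, X i) ω| ≤ Fintype.card ι * a := by
    filter_upwards [ae_all_iff.2 hb] with ω hω
    rw [Finset.sum_apply]
    calc |∑ i, X i ω| ≤ ∑ i, |X i ω| := Finset.abs_sum_le_sum_abs _ _
      _ ≤ ∑ _i : ι, a := Finset.sum_le_sum fun i _ => hω i
      _ = Fintype.card ι * a := by simp
  have hint := integrable_exp_mul_of_ae_abs_le (Finset.aemeasurable_sum _ fun i _ => hX i) hsum s
  calc P.real {ω | ε ≤ ∑ i, (X i ω - P[X i])}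
      = P.real {ω | ε + ∑ i, P[X i] ≤ (∑ i, X i) ω} := by
        congr 1; ext ω; simp [Finset.sum_sub_distrib, le_sub_iff_add_le]
    _ ≤ exp (-s * (ε + ∑ i, P[X i])) * mgf (∑ i, X i) P s := measure_ge_le_exp_mul_mgf _ hs hint
    _ ≤ exp (-s * (ε + ∑ i, P[X i])) *
          exp (∑ i, (s * P[X i] + s ^ 2 * (a * ∫ ω, |X i ω| ∂P))) := by
        gcongr; exact hindep.mgf_sum_le_exp_of_abs_le hX hb (by rwa [abs_of_nonneg hs])
    _ = exp (-s * ε + s ^ 2 * (a * ∑ i, ∫ ω, |X i ω| ∂P)) := by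
        rw [← exp_add, Finset.sum_add_distrib, ← Finset.mul_sum, ← Finset.mul_sum,
          ← Finset.mul_sum]
        ring_nf

lemma iIndepFun.measureReal_abs_sum_sub_integral_ge_le (hindep : iIndepFun X P)
    (hX : ∀ i, AEMeasurable (X i) P) (hb : ∀ i, ∀ᵐ ω ∂P, |X i ω| ≤ a) (ε : ℝ) {s : ℝ}
    (hs : 0 ≤ s) (hsa : s * a ≤ 1) :
    P.real {ω | ε ≤ |∑ i, (X i ω - P[X i])|} ≤
      2 * exp (-s * ε + s ^ 2 * (a * ∑ i, ∫ ω, |X i ω| ∂P)) := by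
  have := hindep.isProbabilityMeasure
  have hupper := hindep.measureReal_sum_sub_integral_ge_le hX hb ε hs hsa
  have hlower := (hindep.comp (fun _ => Neg.neg) fun _ => measurable_neg)
    |>.measureReal_sum_sub_integral_ge_le (fun i => (hX i).neg) (by simpa using hb) ε hs hsa
  simp only [Function.comp_apply, integral_neg, abs_neg, sub_neg_eq_add, neg_add_eq_sub] at hlower
  calc P.real {ω | ε ≤ |∑ i, (X i ω - P[X i])|}
      ≤ P.real ({ω | ε ≤ ∑ i, (X i ω - P[X i])} ∪ {ω | ε ≤ ∑ i, (P[X i] - X i ω)}) := by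
        refine measureReal_mono fun ω hω => ?_
        simpa [le_abs, Finset.sum_sub_distrib] using hω
    _ ≤ _ := (measureReal_union_le _ _).trans (by linarith)

end ProbabilityTheory

/-- Chernoff-Hoeffding bound relative to the mean of the absolute value. -/
theorem chernoff_abs_mean :
    ∃ C : ℝ, 0 < C ∧
      ∀ (N : ℕ), 0 < N →
      ∀ (Ω : Type) (_ : MeasureSpace Ω) (_ : IsProbabilityMeasure (ℙ : Measure Ω))
        (X : Fin N → Ω → ℝ) (a μ μt : ℝ), 0 < a →
        (∀ i, Measurable (X i)) →
        iIndepFun X ℙ →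
        (∀ i j, IdentDistrib (X i) (X j) ℙ ℙ) →
        (∀ i ω, X i ω ∈ Set.Icc (-a) a) →
        (∀ i, ∫ ω, X i ω ∂ℙ = μ) →
        (∀ i, ∫ ω, |X i ω| ∂ℙ = μt) →
        ∀ ε' α : ℝ, 0 < ε' → ε' ≤ 1/2 → 0 < α →
          ENNReal.ofReal (1 - 4 * Real.exp (-(C * N * α * ε' / a))) ≤
            ℙ {ω | |(1 / N : ℝ) * ∑ i, X i ω - μ| ≤ ε' * μt + α} := by
  refine ⟨1 / 2, by norm_num, ?_⟩
  intro N hN Ω _ _ X a μ μt ha hmeas hindep _ hbound hmean habs ε' α hε hε2 hα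
  have hμt : 0 ≤ μt := habs ⟨0, hN⟩ ▸ integral_nonneg fun ω => abs_nonneg _
  have hdev := hindep.measureReal_abs_sum_sub_integral_ge_le (fun i => (hmeas i).aemeasurable)
    (fun i => .of_forall fun ω => abs_le.mpr (hbound i ω)) (N * (ε' * μt + α))
    (s := ε' / (2 * a)) (by positivity) (by field_simp; linarith)
  simp only [hmean, habs, Finset.sum_const, Finset.card_univ, Fintype.card_fin,
    nsmul_eq_mul] at hdev
  have hexponent : -(ε' / (2 * a)) * (N * (ε' * μt + α)) + (ε' / (2 * a)) ^ 2 * (a * (N * μt))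
      ≤ -(1 / 2 * N * α * ε' / a) := by
    field_simp
    nlinarith [mul_nonneg (mul_nonneg (mul_nonneg ha.le hε.le) hμt) (N.cast_nonneg : (0 : ℝ) ≤ N)]
  set A := {ω | |(1 / N : ℝ) * ∑ i, X i ω - μ| ≤ ε' * μt + α}
  have hAc : Aᶜ ⊆ {ω | N * (ε' * μt + α) ≤ |∑ i, (X i ω - μ)|} := fun ω hω => by
    have hN' : (0 : ℝ) < N := by exact_mod_cast hN
    have hsum : ∑ i, (X i ω - μ) = N * ((1 / N : ℝ) * ∑ i, X i ω - μ) := by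
      rw [Finset.sum_sub_distrib]; field_simp; simp
    simp only [Set.mem_compl_iff, Set.mem_ofPred_eq, not_le, A] at hω
    rw [Set.mem_ofPred_eq, hsum, abs_mul, abs_of_pos hN']
    gcongr
  have hcover : 1 ≤ (ℙ : Measure Ω).real A + (ℙ : Measure Ω).real Aᶜ := by
    simpa [Set.union_compl_self] using measureReal_union_le (μ := ℙ) A Aᶜ
  rw [ENNReal.ofReal_le_iff_le_toReal (measure_ne_top _ _), ← measureReal_def]
  have htail : (ℙ : Measure Ω).real Aᶜ ≤ 2 * exp (-(1 / 2 * N * α * ε' / a)) :=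
    (measureReal_mono hAc).trans (hdev.trans (by gcongr))
  linarith [exp_pos (-(1 / 2 * N * α * ε' / a))]
end

section
/- Let M ∈ ℂ^{N×N} with ‖M‖_∞ = 1, let 0 < η ≤ ε be sufficiently small, set t = log₂(1/η), r = log₂(1/ε²), and γ = η/(2t). For any multiset Q ⊆ [N] and any x ∈ ℂ^N with ‖x‖₁ = 1, there exist nonnegative vectors h^{(1)},...,h^{(t)} ∈ ℝ^N with 0 ≤ h^{(i)}_j ≤ 9·2^{-i} for all i, j, such that both E_{j∈Q}[|(Mx)_j|²] and E_{j∈[N]}[|(Mx)_j|²] lie within multiplicative factor 1±O(ε) and additive error O(η) of E_{j∈Q}[∑_{i=1}^t h^{(i)}_j] and E_{j∈[N]}[∑_{i=1}^t h^{(i)}_j], respectively, where the h^{(i)} come from a set H_i of cardinality at most N^{O(ε^{-2}·2^i·log(1/γ))}. -/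
/-!
Write `(Mx)_j / 2` as the mean of a random signed entry `phase c · M_{j l}`, where `(l, c)` is
drawn from a probability vector built from `x` (the phase `0` absorbs the slack between
`|Re| + |Im|` and `2|·|`). At level `i`, the average `g⁽ⁱ⁾` of `kᵢ ≈ ε⁻² 2ⁱ log(1/γ)` such draws
is `ε 2^{-i/2}`-close to `Mx` at every coordinate outside a set of weight `O(γ²)` (Chernoff), and
an averaging argument finds one sample doing so for the average over `Q` and over `[N]` at once.
The level-`i` vector keeps `|g⁽ⁱ⁾_j|²`, capped at `9·2⁻ⁱ`, at the coordinates whose first level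
with `|g_j| ≥ 2·2^{-i/2}` is `i`. At an accurate coordinate this is `(1 ± 3ε)|(Mx)_j|²`, and a
coordinate that never crosses has `|(Mx)_j|² ≤ 9·2⁻ᵗ ≤ 9η`; inaccurate coordinates cost at most
`9` each. Since the level-`i` vector depends only on the samples at levels `≤ i`, there are at
most `(5N)^{Σ_{n ≤ i} kₙ}` of them.
-/

open Real Finset

noncomputable section

def scale (i : ℕ) : ℝ := √((1 / 2) ^ i)

lemma scale_pos (i : ℕ) : 0 < scale i := Real.sqrt_pos.2 (by positivity)

lemma scale_sq (i : ℕ) : scale i ^ 2 = (1 / 2) ^ i := Real.sq_sqrt (by positivity)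

lemma scale_le_one (i : ℕ) : scale i ≤ 1 :=
  Real.sqrt_le_one.2 (pow_le_one₀ (by norm_num) (by norm_num))

lemma scale_eq_sqrt_two_mul (n : ℕ) : scale n = √2 * scale (n + 1) := by
  rw [scale, scale, ← Real.sqrt_mul zero_le_two, pow_succ]
  ring_nf

/-- The paper's `j ∈ Bᵢ`, for `A n = |g⁽ⁿ⁾_j|`. -/
def IsFirstCrossing (A : ℕ → ℝ) (i : ℕ) : Prop :=
  2 * scale i ≤ A i ∧ ∀ n ∈ Ico 1 i, A n < 2 * scale n

open scoped Classical in
def scaleComponent (A : ℕ → ℝ) (i : ℕ) : ℝ :=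
  if IsFirstCrossing A i then min (A i ^ 2) (9 * (1 / 2) ^ i) else 0

lemma scaleComponent_nonneg (A : ℕ → ℝ) (i : ℕ) : 0 ≤ scaleComponent A i := by
  unfold scaleComponent
  split_ifs
  exacts [le_min (sq_nonneg _) (by positivity), le_rfl]

lemma scaleComponent_le (A : ℕ → ℝ) (i : ℕ) : scaleComponent A i ≤ 9 / 2 ^ i := by
  have : (9 : ℝ) / 2 ^ i = 9 * (1 / 2) ^ i := by rw [one_div_pow, mul_one_div]
  rw [this, scaleComponent]
  split_ifs
  exacts [min_le_right _ _, by positivity]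

lemma scaleComponent_congr {A B : ℕ → ℝ} {i : ℕ} (h : ∀ n ≤ i, A n = B n) :
    scaleComponent A i = scaleComponent B i := by
  have hAB : IsFirstCrossing A i ↔ IsFirstCrossing B i := by
    unfold IsFirstCrossing
    refine and_congr (by rw [h i le_rfl]) (forall₂_congr fun n hn => ?_)
    rw [h n (mem_Ico.1 hn).2.le]
  simp only [scaleComponent, h i le_rfl]
  classical
  exact if_congr hAB rfl rfl

lemma IsFirstCrossing.eq {A : ℕ → ℝ} {i n : ℕ} (hi : IsFirstCrossing A i)
    (hn : IsFirstCrossing A n) (hi1 : 1 ≤ i) (hn1 : 1 ≤ n) : i = n := by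
  by_contra hne
  rcases Nat.lt_or_gt_of_ne hne with h | h
  · exact (hn.2 i (mem_Ico.2 ⟨hi1, h⟩)).not_ge hi.1
  · exact (hi.2 n (mem_Ico.2 ⟨hn1, h⟩)).not_ge hn.1

lemma exists_isFirstCrossing {A : ℕ → ℝ} {t : ℕ}
    (h : ∃ i ∈ Icc 1 t, 2 * scale i ≤ A i) : ∃ i ∈ Icc 1 t, IsFirstCrossing A i := by
  classical
  obtain ⟨i, hi, hA⟩ := h
  have hex : ∃ i, 1 ≤ i ∧ 2 * scale i ≤ A i := ⟨i, (mem_Icc.1 hi).1, hA⟩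
  refine ⟨Nat.find hex, mem_Icc.2 ⟨(Nat.find_spec hex).1, ?_⟩, (Nat.find_spec hex).2,
    fun n hn => ?_⟩
  · exact (Nat.find_min' hex ⟨(mem_Icc.1 hi).1, hA⟩).trans (mem_Icc.1 hi).2
  · obtain ⟨hn1, hnlt⟩ := mem_Ico.1 hn
    exact lt_of_not_ge fun hle => Nat.find_min hex hnlt ⟨hn1, hle⟩

lemma sum_scaleComponent_of_isFirstCrossing {A : ℕ → ℝ} {t i : ℕ} (hi : i ∈ Icc 1 t)
    (hA : IsFirstCrossing A i) : ∑ n ∈ Icc 1 t, scaleComponent A n = scaleComponent A i := by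
  refine sum_eq_single_of_mem i hi fun n hn hne => ?_
  rw [scaleComponent, if_neg fun hAn => hne (hAn.eq hA (mem_Icc.1 hn).1 (mem_Icc.1 hi).1)]

lemma sum_scaleComponent_eq_zero {A : ℕ → ℝ} {t : ℕ}
    (hA : ∀ i ∈ Icc 1 t, A i < 2 * scale i) : ∑ n ∈ Icc 1 t, scaleComponent A n = 0 :=
  sum_eq_zero fun n hn => by
    rw [scaleComponent, if_neg fun h : IsFirstCrossing A n => (hA n hn).not_ge h.1]

lemma sum_scaleComponent_le_nine (A : ℕ → ℝ) (t : ℕ) :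
    ∑ n ∈ Icc 1 t, scaleComponent A n ≤ 9 := by
  rcases em (∃ i ∈ Icc 1 t, 2 * scale i ≤ A i) with h | h
  · obtain ⟨i, hi, hA⟩ := exists_isFirstCrossing h
    rw [sum_scaleComponent_of_isFirstCrossing hi hA]
    exact (scaleComponent_le A i).trans (div_le_self (by norm_num) (one_le_pow₀ one_le_two))
  · simp only [not_exists, not_and, not_le] at h
    rw [sum_scaleComponent_eq_zero h]
    norm_num

lemma abs_sq_sub_sq_le {A Y ε : ℝ} (hY : 0 ≤ Y) (hε : ε ≤ 1) (h : |A - Y| ≤ ε * Y) :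
    |Y ^ 2 - A ^ 2| ≤ 3 * ε * Y ^ 2 := by
  have hsum : |A + Y| ≤ 3 * Y := by
    have := abs_add_le (A - Y) (2 * Y)
    rw [abs_of_nonneg (by positivity : 0 ≤ 2 * Y)] at this
    ring_nf at this ⊢
    nlinarith [abs_nonneg (A - Y)]
  calc |Y ^ 2 - A ^ 2| = |A - Y| * |A + Y| := by
        rw [← abs_mul, abs_sub_comm]; ring_nf
    _ ≤ (ε * Y) * (3 * Y) := mul_le_mul h hsum (abs_nonneg _) ((abs_nonneg _).trans h)
    _ = 3 * ε * Y ^ 2 := by ring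

section Crossing

variable {A : ℕ → ℝ} {Y ε : ℝ}

/-- At the first crossing the cap `9 · 2^{-i}` is inactive, because one level earlier `A` was
still below `2 · 2^{-(i-1)/2} = 2√2 · 2^{-i/2}`. -/
lemma le_three_mul_scale_of_isFirstCrossing {i : ℕ} (hA : IsFirstCrossing A i) (hi : 1 ≤ i)
    (hY : Y ≤ 1) (hε : 0 < ε) (hε₀ : ε ≤ 1 / 100)
    (hclose : ∀ n ∈ Icc 1 i, |A n - Y| < ε * scale n) : A i ≤ 3 * scale i := by
  have hAi := (abs_lt.1 (hclose i (mem_Icc.2 ⟨hi, le_rfl⟩))).2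
  have hs := scale_pos i
  have hεs : ε * scale i ≤ 1 / 100 * scale i := mul_le_mul_of_nonneg_right hε₀ hs.le
  obtain _ | _ | n := i
  · omega
  · have h1 := scale_sq 1
    nlinarith
  · have hprev := (abs_lt.1 (hclose (n + 1) (mem_Icc.2 ⟨by omega, by omega⟩))).1
    have hAprev := hA.2 (n + 1) (mem_Ico.2 ⟨by omega, by omega⟩)
    have hscale : scale (n + 1) ≤ 1.42 * scale (n + 1 + 1) := by
      have hsqrt : √2 < 1.42 := by rw [Real.sqrt_lt' (by norm_num)]; norm_num
      rw [scale_eq_sqrt_two_mul (n + 1)]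
      exact mul_le_mul_of_nonneg_right hsqrt.le hs.le
    have hεs' : ε * scale (n + 1) ≤ 1 / 100 * scale (n + 1) :=
      mul_le_mul_of_nonneg_right hε₀ (scale_pos _).le
    linarith

lemma abs_sq_sub_scaleComponent_le {i : ℕ} (hA : IsFirstCrossing A i) (hi : 1 ≤ i)
    (hY0 : 0 ≤ Y) (hY : Y ≤ 1) (hε : 0 < ε) (hε₀ : ε ≤ 1 / 100)
    (hclose : ∀ n ∈ Icc 1 i, |A n - Y| < ε * scale n) :
    |Y ^ 2 - scaleComponent A i| ≤ 3 * ε * Y ^ 2 := by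
  have hAi := hclose i (mem_Icc.2 ⟨hi, le_rfl⟩)
  have hs := scale_pos i
  have hcap : A i ^ 2 ≤ 9 * (1 / 2) ^ i := by
    rw [← scale_sq]
    nlinarith [le_three_mul_scale_of_isFirstCrossing hA hi hY hε hε₀ hclose, hA.1]
  have hsY : scale i ≤ Y := by
    nlinarith [(abs_lt.1 hAi).2, hA.1, mul_le_mul_of_nonneg_right hε₀ hs.le]
  rw [scaleComponent, if_pos hA, min_eq_left hcap]
  refine abs_sq_sub_sq_le hY0 (by linarith) (hAi.le.trans ?_)
  exact mul_le_mul_of_nonneg_left hsY hε.le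

lemma abs_sq_sub_sum_scaleComponent_le_of_close {t : ℕ} {η : ℝ} (ht : 1 ≤ t)
    (hη : (1 / 2) ^ t ≤ η) (hY0 : 0 ≤ Y) (hY : Y ≤ 1) (hε : 0 < ε) (hε₀ : ε ≤ 1 / 100)
    (hclose : ∀ n ∈ Icc 1 t, |A n - Y| < ε * scale n) :
    |Y ^ 2 - ∑ n ∈ Icc 1 t, scaleComponent A n| ≤ 3 * ε * Y ^ 2 + 9 * η := by
  have h3 : 0 ≤ 3 * ε * Y ^ 2 := by positivity
  have hη0 : 0 ≤ η := (pow_pos one_half_pos t).le.trans hη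
  rcases em (∃ i ∈ Icc 1 t, 2 * scale i ≤ A i) with hex | hnone
  · obtain ⟨i, hi, hAi⟩ := exists_isFirstCrossing hex
    rw [sum_scaleComponent_of_isFirstCrossing hi hAi]
    have hit := mem_Icc.1 hi
    have := abs_sq_sub_scaleComponent_le hAi hit.1 hY0 hY hε hε₀
      fun n hn => hclose n (mem_Icc.2 ⟨(mem_Icc.1 hn).1, (mem_Icc.1 hn).2.trans hit.2⟩)
    linarith
  · simp only [not_exists, not_and, not_le] at hnone
    rw [sum_scaleComponent_eq_zero hnone, sub_zero, abs_of_nonneg (sq_nonneg Y)]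
    have htt : t ∈ Icc 1 t := mem_Icc.2 ⟨ht, le_rfl⟩
    have hYt : Y < 3 * scale t := by
      nlinarith [(abs_lt.1 (hclose t htt)).1, hnone t htt, scale_le_one t, scale_pos t]
    have : Y ^ 2 ≤ 9 * (1 / 2) ^ t := by
      rw [← scale_sq]; nlinarith
    linarith

lemma abs_sq_sub_sum_scaleComponent_le {t : ℕ} {η : ℝ} (ht : 1 ≤ t)
    (hη : (1 / 2) ^ t ≤ η) (hY0 : 0 ≤ Y) (hY : Y ≤ 1) (hε : 0 < ε) (hε₀ : ε ≤ 1 / 100) :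
    |Y ^ 2 - ∑ n ∈ Icc 1 t, scaleComponent A n| ≤
      3 * ε * Y ^ 2 + 9 * η +
        9 * ∑ n ∈ Icc 1 t, if ε * scale n ≤ |A n - Y| then (1 : ℝ) else 0 := by
  have hη0 : 0 ≤ η := (pow_pos one_half_pos t).le.trans hη
  have hbad0 : 0 ≤ ∑ n ∈ Icc 1 t, if ε * scale n ≤ |A n - Y| then (1 : ℝ) else 0 :=
    sum_nonneg fun n _ => by split_ifs <;> norm_num
  rcases em (∀ n ∈ Icc 1 t, |A n - Y| < ε * scale n) with hclose | hbad
  · have := abs_sq_sub_sum_scaleComponent_le_of_close ht hη hY0 hY hε hε₀ hclose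
    linarith
  · simp only [not_forall, not_lt] at hbad
    obtain ⟨i, hi, hAi⟩ := hbad
    have hone : (1 : ℝ) ≤ ∑ n ∈ Icc 1 t, if ε * scale n ≤ |A n - Y| then (1 : ℝ) else 0 := by
      refine le_of_eq_of_le (if_pos hAi).symm (single_le_sum (f := fun n =>
        if ε * scale n ≤ |A n - Y| then (1 : ℝ) else 0) (fun n _ => ?_) hi)
      split_ifs <;> norm_num
    have hnine : |Y ^ 2 - ∑ n ∈ Icc 1 t, scaleComponent A n| ≤ 9 :=
      abs_sub_le_of_nonneg_of_le (sq_nonneg Y) (by nlinarith)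
        (sum_nonneg fun n _ => scaleComponent_nonneg A n) (sum_scaleComponent_le_nine A t)
    have : 0 ≤ 3 * ε * Y ^ 2 := by positivity
    nlinarith

end Crossing

lemma abs_weighted_sum_sub_le {ι : Type*} [Fintype ι] {w Y : ι → ℝ} {A : ι → ℕ → ℝ}
    {t : ℕ} {ε η : ℝ} (hw0 : ∀ j, 0 ≤ w j) (hw1 : ∑ j, w j = 1) (hY0 : ∀ j, 0 ≤ Y j)
    (hY1 : ∀ j, Y j ≤ 1) (ht : 1 ≤ t) (hη : (1 / 2) ^ t ≤ η) (hε : 0 < ε)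
    (hε₀ : ε ≤ 1 / 100) :
    |∑ j, w j * Y j ^ 2 - ∑ j, w j * ∑ n ∈ Icc 1 t, scaleComponent (A j) n| ≤
      3 * ε * ∑ j, w j * Y j ^ 2 + 9 * η +
        9 * ∑ n ∈ Icc 1 t, ∑ j, w j * if ε * scale n ≤ |A j n - Y j| then 1 else 0 := by
  rw [← sum_sub_distrib]
  refine (abs_sum_le_sum_abs _ _).trans ?_
  calc ∑ j, |w j * Y j ^ 2 - w j * ∑ n ∈ Icc 1 t, scaleComponent (A j) n|
      ≤ ∑ j, w j * (3 * ε * Y j ^ 2 + 9 * η +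
          9 * ∑ n ∈ Icc 1 t, if ε * scale n ≤ |A j n - Y j| then 1 else 0) := by
        refine sum_le_sum fun j _ => ?_
        rw [← mul_sub, abs_mul, abs_of_nonneg (hw0 j)]
        exact mul_le_mul_of_nonneg_left
          (abs_sq_sub_sum_scaleComponent_le ht hη (hY0 j) (hY1 j) hε hε₀) (hw0 j)
    _ = _ := by
        simp only [mul_add, sum_add_distrib, mul_sum, ← sum_mul, hw1]
        rw [sum_comm (s := univ)]
        congr 1
        · congr 1
          · exact sum_congr rfl fun j _ => by ring
          · ring
        · exact sum_congr rfl fun n _ => sum_congr rfl fun j _ => by ring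

lemma mem_Icc_of_abs_sub_le {V S ε η : ℝ} (hS : 0 ≤ S) (hε : 0 ≤ ε) (hε₀ : ε ≤ 1 / 100)
    (hη : 0 ≤ η) (h : |V - S| ≤ 3 * ε * V + 10 * η) :
    V ∈ Set.Icc ((1 - 4 * ε) * S - 11 * η) ((1 + 4 * ε) * S + 11 * η) := by
  obtain ⟨hlo, hhi⟩ := abs_le.1 h
  have hup : V ≤ (1 + 4 * ε) * S + 11 * η := by
    nlinarith [mul_nonneg (mul_nonneg hε hS) (by linarith : (0 : ℝ) ≤ 1 - 12 * ε),
      mul_nonneg hη (by linarith : (0 : ℝ) ≤ 1 - 33 * ε)]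
  refine ⟨?_, hup⟩
  nlinarith [mul_le_mul_of_nonneg_left hup hε, mul_nonneg (mul_nonneg hε hS)
    (by linarith : (0 : ℝ) ≤ 1 - 12 * ε), mul_nonneg hη (by linarith : (0 : ℝ) ≤ 1 - 33 * ε)]

section Sampling

variable {α : Type*} [Fintype α]

/-- The expectation of `F` over `k` independent draws from the weights `q`. -/
def sampleMean (q : α → ℝ) (k : ℕ) (F : (Fin k → α) → ℝ) : ℝ :=
  ∑ ω, (∏ s, q (ω s)) * F ω

variable {q : α → ℝ} {k : ℕ}

lemma sampleMean_mono (hq : ∀ a, 0 ≤ q a) {F G : (Fin k → α) → ℝ} (h : ∀ ω, F ω ≤ G ω) :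
    sampleMean q k F ≤ sampleMean q k G :=
  sum_le_sum fun ω _ => mul_le_mul_of_nonneg_left (h ω) (prod_nonneg fun _ _ => hq _)

lemma sampleMean_sum {ι : Type*} (t : Finset ι) (F : ι → (Fin k → α) → ℝ) :
    sampleMean q k (fun ω => ∑ i ∈ t, F i ω) = ∑ i ∈ t, sampleMean q k (F i) := by
  simp only [sampleMean, mul_sum]
  exact sum_comm

lemma sampleMean_const_mul (c : ℝ) (F : (Fin k → α) → ℝ) :
    sampleMean q k (fun ω => c * F ω) = c * sampleMean q k F := by
  simp only [sampleMean, mul_sum]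
  exact sum_congr rfl fun ω _ => by ring

lemma sampleMean_exp_sum (f : α → ℝ) :
    sampleMean q k (fun ω => exp (∑ s, f (ω s))) = (∑ a, q a * exp (f a)) ^ k := by
  classical
  have h := prod_univ_sum (fun _ : Fin k => (univ : Finset α)) fun _ a => q a * exp (f a)
  rw [Fintype.piFinset_univ, prod_const, card_univ, Fintype.card_fin] at h
  rw [h, sampleMean]
  exact sum_congr rfl fun ω _ => by rw [Real.exp_sum, prod_mul_distrib]

lemma sampleMean_one (hq : ∑ a, q a = 1) : sampleMean q k (fun _ => 1) = 1 := by
  simpa [hq] using sampleMean_exp_sum (q := q) (k := k) 0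

lemma exists_le_of_sampleMean_le (hq0 : ∀ a, 0 ≤ q a) (hq1 : ∑ a, q a = 1)
    {F : (Fin k → α) → ℝ} {c : ℝ} (h : sampleMean q k F ≤ c) : ∃ ω, F ω ≤ c := by
  by_contra! hlt
  have hne : ∑ ω : Fin k → α, ∏ s, q (ω s) ≠ 0 := by
    simpa [sampleMean] using (sampleMean_one (k := k) hq1).trans_ne one_ne_zero
  obtain ⟨ω₀, -, hω₀⟩ := exists_ne_zero_of_sum_ne_zero hne
  have hpos : 0 < ∏ s, q (ω₀ s) := lt_of_le_of_ne (prod_nonneg fun _ _ => hq0 _) hω₀.symm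
  have : sampleMean q k (fun _ => c) < sampleMean q k F :=
    sum_lt_sum (fun ω _ => mul_le_mul_of_nonneg_left (hlt ω).le (prod_nonneg fun _ _ => hq0 _))
      ⟨ω₀, mem_univ _, mul_lt_mul_of_pos_left (hlt ω₀) hpos⟩
  rw [← mul_one c, ← sampleMean_one (k := k) hq1, ← sampleMean_const_mul] at h
  simp only [mul_one] at h this
  linarith

lemma exp_le_one_add_add_sq {x : ℝ} (hx : |x| ≤ 1) : exp x ≤ 1 + x + x ^ 2 := by
  linarith [(abs_le.1 (Real.abs_exp_sub_one_sub_id_le hx)).2]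

/-- Chernoff's bound: Markov's inequality for `exp (l ∑ ζ)`, with `eˣ ≤ 1 + x + x²`. -/
lemma sampleMean_indicator_sum_ge_le (hq0 : ∀ a, 0 ≤ q a) (hq1 : ∑ a, q a = 1) (hk : 0 < k)
    {ζ : α → ℝ} (hζ : ∀ a, |ζ a| ≤ 2) (hmean : ∑ a, q a * ζ a = 0) {b : ℝ} (hb0 : 0 ≤ b)
    (hbk : b ≤ 4 * k) :
    sampleMean q k (fun ω => if b ≤ ∑ s, ζ (ω s) then 1 else 0) ≤ exp (-b ^ 2 / (16 * k)) := by
  have hk0 : (0 : ℝ) < k := Nat.cast_pos.2 hk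
  -- `l = b / 8k` minimises the exponent `-l b + 4 k l²` of the bound
  set l := b / (8 * k) with hl
  have hl0 : 0 ≤ l := by positivity
  have hl1 : l ≤ 1 / 2 := by rw [hl, div_le_iff₀ (by positivity)]; linarith
  have hmarkov : ∀ ω : Fin k → α, (if b ≤ ∑ s, ζ (ω s) then (1 : ℝ) else 0) ≤
      exp (-(l * b)) * exp (∑ s, l * ζ (ω s)) := by
    intro ω
    rw [← Real.exp_add, ← mul_sum]
    split_ifs with h
    · exact Real.one_le_exp (by nlinarith)
    · positivity
  have hatom : ∑ a, q a * exp (l * ζ a) ≤ exp (4 * l ^ 2) := by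
    have hle : ∀ a, q a * exp (l * ζ a) ≤ q a * (1 + l * ζ a + 4 * l ^ 2) := fun a => by
      have hlζ : |l * ζ a| ≤ 1 := by
        rw [abs_mul, abs_of_nonneg hl0]; nlinarith [hζ a, abs_nonneg (ζ a)]
      have : (l * ζ a) ^ 2 ≤ 4 * l ^ 2 := by
        have h4 : |ζ a| ^ 2 ≤ 2 ^ 2 := pow_le_pow_left₀ (abs_nonneg _) (hζ a) 2
        rw [mul_pow, ← sq_abs (ζ a)]
        nlinarith [mul_le_mul_of_nonneg_left h4 (sq_nonneg l)]
      exact mul_le_mul_of_nonneg_left (by linarith [exp_le_one_add_add_sq hlζ]) (hq0 a)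
    calc ∑ a, q a * exp (l * ζ a) ≤ ∑ a, q a * (1 + l * ζ a + 4 * l ^ 2) :=
          sum_le_sum fun a _ => hle a
      _ = (∑ a, q a) * (1 + 4 * l ^ 2) + l * ∑ a, q a * ζ a := by
        rw [sum_mul, mul_sum, ← sum_add_distrib]; exact sum_congr rfl fun a _ => by ring
      _ ≤ exp (4 * l ^ 2) := by rw [hq1, hmean]; linarith [Real.add_one_le_exp (4 * l ^ 2)]
  calc sampleMean q k (fun ω => if b ≤ ∑ s, ζ (ω s) then 1 else 0)
      ≤ sampleMean q k (fun ω => exp (-(l * b)) * exp (∑ s, l * ζ (ω s))) :=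
        sampleMean_mono hq0 hmarkov
    _ = exp (-(l * b)) * (∑ a, q a * exp (l * ζ a)) ^ k := by
        rw [sampleMean_const_mul, sampleMean_exp_sum fun a => l * ζ a]
    _ ≤ exp (-(l * b)) * exp (4 * l ^ 2) ^ k := by
        gcongr
        exact sum_nonneg fun a _ => mul_nonneg (hq0 a) (Real.exp_pos _).le
    _ = exp (-b ^ 2 / (16 * k)) := by
        rw [← Real.exp_nat_mul, ← Real.exp_add, hl]
        congr 1
        field_simp
        ring

end Sampling

section Complex

open Complex

lemma exists_norm_div_two_le_re_I_pow_mul (w : ℂ) :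
    ∃ c : Fin 4, ‖w‖ / 2 ≤ (I ^ (c : ℕ) * w).re := by
  have hre : ∀ c : Fin 4, (I ^ (c : ℕ) * w).re = ![w.re, -w.im, -w.re, w.im] c := by
    intro c; fin_cases c <;> simp [pow_succ]
  simp only [hre]
  have h := Complex.norm_le_abs_re_add_abs_im w
  rcases le_total |w.im| |w.re| with hle | hle
  · rcases abs_cases w.re with ⟨h0, -⟩ | ⟨h0, -⟩
    · exact ⟨0, show ‖w‖ / 2 ≤ w.re by linarith⟩
    · exact ⟨2, show ‖w‖ / 2 ≤ -w.re by linarith⟩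
  · rcases abs_cases w.im with ⟨h0, -⟩ | ⟨h0, -⟩
    · exact ⟨3, show ‖w‖ / 2 ≤ w.im by linarith⟩
    · exact ⟨1, show ‖w‖ / 2 ≤ -w.im by linarith⟩

variable {α : Type*}

def sampleAvg {k : ℕ} (Z : α → ℂ) (ω : Fin k → α) : ℂ := (k : ℂ)⁻¹ * ∑ s, Z (ω s)

lemma exists_le_sum_re_of_le_norm_sampleAvg_sub {k : ℕ} (hk : 0 < k) (Z : α → ℂ) (u : ℂ)
    (ω : Fin k → α) {σ : ℝ} (hσ : σ ≤ ‖sampleAvg Z ω - u‖) :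
    ∃ c : Fin 4, k * σ / 2 ≤ ∑ s, (I ^ (c : ℕ) * (Z (ω s) - u)).re := by
  have hk0 : (k : ℂ) ≠ 0 := Nat.cast_ne_zero.2 hk.ne'
  obtain ⟨c, hc⟩ := exists_norm_div_two_le_re_I_pow_mul (∑ s, (Z (ω s) - u))
  refine ⟨c, ?_⟩
  rw [← re_sum, ← mul_sum]
  have : ‖∑ s, (Z (ω s) - u)‖ = k * ‖sampleAvg Z ω - u‖ := by
    rw [sampleAvg, sum_sub_distrib, sum_const, card_univ, Fintype.card_fin, nsmul_eq_mul,
      ← Complex.norm_natCast k, ← norm_mul, mul_sub, ← mul_assoc, mul_inv_cancel₀ hk0, one_mul]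
  rw [this] at hc
  nlinarith [(Nat.cast_pos (α := ℝ)).2 hk]

variable [Fintype α] {q : α → ℝ} {k : ℕ}

/-- Each of the four directions `re, -re, im, -im` is handled by the real Chernoff bound. -/
lemma sampleMean_indicator_le_norm_sampleAvg_sub_le (hq0 : ∀ a, 0 ≤ q a) (hq1 : ∑ a, q a = 1)
    (hk : 0 < k) {Z : α → ℂ} (hZ : ∀ a, ‖Z a‖ ≤ 1) {σ : ℝ} (hσ0 : 0 ≤ σ) (hσ1 : σ ≤ 1) :
    sampleMean q k (fun ω => if σ ≤ ‖sampleAvg Z ω - ∑ a, (q a : ℂ) * Z a‖ then 1 else 0) ≤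
      4 * Real.exp (-(k * σ ^ 2) / 64) := by
  set u := ∑ a, (q a : ℂ) * Z a
  set ζ : Fin 4 → α → ℝ := fun c a => (I ^ (c : ℕ) * (Z a - u)).re
  have hu : ‖u‖ ≤ 1 := by
    refine (norm_sum_le _ _).trans ?_
    calc ∑ a, ‖(q a : ℂ) * Z a‖ ≤ ∑ a, q a := sum_le_sum fun a _ => by
          rw [norm_mul, norm_real, Real.norm_of_nonneg (hq0 a)]
          exact mul_le_of_le_one_right (hq0 a) (hZ a)
      _ = 1 := hq1
  have hζ : ∀ c a, |ζ c a| ≤ 2 := fun c a => by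
    refine (abs_re_le_norm _).trans ?_
    rw [norm_mul, norm_pow, norm_I, one_pow, one_mul]
    exact (norm_sub_le _ _).trans (by linarith [hZ a])
  have hmean : ∀ c, ∑ a, q a * ζ c a = 0 := fun c => by
    have : ∑ a, (q a : ℂ) * (Z a - u) = 0 := by
      simp only [mul_sub, sum_sub_distrib, ← sum_mul, ← ofReal_sum, hq1, ofReal_one, one_mul,
        sub_self, u]
    simp only [ζ, ← re_ofReal_mul, ← re_sum, mul_left_comm _ (I ^ _), ← mul_sum, this,
      mul_zero, zero_re]
  have hk0 : (0 : ℝ) < k := Nat.cast_pos.2 hk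
  calc sampleMean q k (fun ω => if σ ≤ ‖sampleAvg Z ω - u‖ then 1 else 0)
      ≤ sampleMean q k (fun ω => ∑ c, if k * σ / 2 ≤ ∑ s, ζ c (ω s) then 1 else 0) := by
        refine sampleMean_mono hq0 fun ω => ?_
        split_ifs with h
        · obtain ⟨c, hc⟩ := exists_le_sum_re_of_le_norm_sampleAvg_sub hk Z u ω h
          refine le_of_eq_of_le (if_pos hc).symm (single_le_sum (f := fun c =>
            if k * σ / 2 ≤ ∑ s, ζ c (ω s) then (1 : ℝ) else 0) (fun c _ => ?_) (mem_univ c))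
          split_ifs <;> norm_num
        · exact sum_nonneg fun c _ => by split_ifs <;> norm_num
    _ = ∑ c : Fin 4, sampleMean q k (fun ω => if k * σ / 2 ≤ ∑ s, ζ c (ω s) then 1 else 0) :=
        sampleMean_sum _ _
    _ ≤ ∑ _c : Fin 4, Real.exp (-(k * σ / 2) ^ 2 / (16 * k)) :=
        sum_le_sum fun c _ => sampleMean_indicator_sum_ge_le hq0 hq1 hk (hζ c) (hmean c)
          (by positivity) (by nlinarith)
    _ = 4 * Real.exp (-(k * σ ^ 2) / 64) := by
        rw [sum_const, card_univ, Fintype.card_fin, nsmul_eq_mul]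
        congr 2
        field_simp
        ring

end Complex

section Net

open Complex

def phase : Fin 5 → ℂ := ![1, -1, I, -I, 0]

/-- Coefficients writing `z` over `phase` with total mass exactly `2‖z‖`: the phase `0` takes up
the slack `2‖z‖ - |Re z| - |Im z| ≥ 0`. -/
def phaseWeight (z : ℂ) : Fin 5 → ℝ :=
  ![max z.re 0, max (-z.re) 0, max z.im 0, max (-z.im) 0, 2 * ‖z‖ - |z.re| - |z.im|]

lemma norm_phase_le_one (c : Fin 5) : ‖phase c‖ ≤ 1 := by
  fin_cases c <;> simp [phase]

lemma phaseWeight_nonneg (z : ℂ) (c : Fin 5) : 0 ≤ phaseWeight z c := by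
  have h : |z.re| + |z.im| ≤ 2 * ‖z‖ := by
    linarith [Complex.abs_re_le_norm z, Complex.abs_im_le_norm z]
  fin_cases c <;> simp [phaseWeight, sub_sub, h]

lemma sum_phaseWeight (z : ℂ) : ∑ c, phaseWeight z c = 2 * ‖z‖ := by
  have hre := max_zero_add_max_neg_zero_eq_abs_self z.re
  have him := max_zero_add_max_neg_zero_eq_abs_self z.im
  simp only [phaseWeight, Fin.sum_univ_five, Matrix.cons_val]
  linarith

lemma sum_phaseWeight_mul_phase (z : ℂ) : ∑ c, (phaseWeight z c : ℂ) * phase c = z := by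
  simp only [phaseWeight, phase, Fin.sum_univ_five, Matrix.cons_val]
  calc _ = ((max z.re 0 - max (-z.re) 0 : ℝ) : ℂ) + ((max z.im 0 - max (-z.im) 0 : ℝ) : ℂ) * I := by
        push_cast; ring
    _ = z := by
        rw [max_zero_sub_max_neg_zero_eq_self, max_zero_sub_max_neg_zero_eq_self, re_add_im]

variable {N : ℕ}

def columnAtom (M : Matrix (Fin N) (Fin N) ℂ) (j : Fin N) (a : Fin N × Fin 5) : ℂ :=
  phase a.2 * M j a.1

def netPoint (M : Matrix (Fin N) (Fin N) ℂ) {k : ℕ} (ω : Fin k → Fin N × Fin 5) (j : Fin N) :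
    ℂ :=
  2 * sampleAvg (columnAtom M j) ω

/-- The level-`i` vector `h⁽ⁱ⁾` built from a sample `ω n` of size `K n` at every level `n`. -/
def netProfile (M : Matrix (Fin N) (Fin N) ℂ) (K : ℕ → ℕ) (ω : ∀ n, Fin (K n) → Fin N × Fin 5)
    (i : ℕ) (j : Fin N) : ℝ :=
  scaleComponent (fun n => ‖netPoint M (ω n) j‖) i

def net (M : Matrix (Fin N) (Fin N) ℂ) (K : ℕ → ℕ) (i : ℕ) : Set (Fin N → ℝ) :=
  Set.range fun ω => netProfile M K ω i

/-- `netProfile M K ω i` only depends on the samples at levels `n ≤ i`. -/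
lemma net_finite_and_ncard_le (M : Matrix (Fin N) (Fin N) ℂ) (K : ℕ → ℕ) (i : ℕ) :
    (net M K i).Finite ∧ (net M K i).ncard ≤ (N * 5) ^ ∑ n ∈ range (i + 1), K n := by
  set res : (∀ n, Fin (K n) → Fin N × Fin 5) → ∀ n : Fin (i + 1), Fin (K n) → Fin N × Fin 5 :=
    fun ω n => ω n
  have hfactor : Function.FactorsThrough (fun ω => netProfile M K ω i) res := by
    intro ω ω' h
    funext j
    refine scaleComponent_congr fun n hn => ?_
    have := congrFun h ⟨n, Nat.lt_succ_of_le hn⟩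
    simp only [res] at this
    rw [this]
  have hsub : net M K i ⊆ Set.range (Function.extend res (fun ω => netProfile M K ω i) 0) := by
    rintro _ ⟨ω, rfl⟩
    exact ⟨res ω, hfactor.extend_apply _ ω⟩
  refine ⟨(Set.finite_range _).subset hsub, (Set.ncard_le_ncard hsub (Set.finite_range _)).trans ?_⟩
  rw [← Set.image_univ]
  refine (Set.ncard_image_le Set.finite_univ).trans (le_of_eq ?_)
  rw [Set.ncard_univ, Nat.card_pi]
  simp only [Nat.card_eq_fintype_card, Fintype.card_fun, Fintype.card_prod, Fintype.card_fin]
  rw [prod_pow_eq_pow_sum, Fin.sum_univ_eq_sum_range K]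

def sampleSize (ε L : ℝ) (n : ℕ) : ℕ := ⌈512 * ε⁻¹ ^ 2 * 2 ^ n * L⌉₊

lemma sampleSize_pos {ε L : ℝ} (hε : 0 < ε) (hL : 0 < L) (n : ℕ) : 0 < sampleSize ε L n :=
  Nat.ceil_pos.2 (by positivity)

lemma sum_sampleSize_le {ε L : ℝ} (hX : 1 ≤ ε⁻¹ ^ 2 * L) (i : ℕ) :
    (∑ n ∈ range (i + 1), (sampleSize ε L n : ℝ)) ≤ 1026 * ε⁻¹ ^ 2 * 2 ^ i * L := by
  have hgeom : ∑ n ∈ range (i + 1), (2 : ℝ) ^ n ≤ 2 * 2 ^ i := by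
    have := Nat.geomSum_lt le_rfl (s := range (i + 1)) fun n hn => mem_range.1 hn
    rw [pow_succ'] at this
    exact_mod_cast this.le
  calc ∑ n ∈ range (i + 1), (sampleSize ε L n : ℝ)
      ≤ ∑ n ∈ range (i + 1), 513 * (ε⁻¹ ^ 2 * L) * 2 ^ n := sum_le_sum fun n _ => by
        have hceil := Nat.ceil_lt_add_one (R := ℝ)
          (mul_nonneg (by positivity) (zero_le_one.trans hX) : 0 ≤ 512 * 2 ^ n * (ε⁻¹ ^ 2 * L))
        have h2n : 1 ≤ ε⁻¹ ^ 2 * L * 2 ^ n :=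
          one_le_mul_of_one_le_of_one_le hX (one_le_pow₀ one_le_two)
        rw [sampleSize]
        ring_nf at hceil ⊢
        linarith
    _ = 513 * (ε⁻¹ ^ 2 * L) * ∑ n ∈ range (i + 1), (2 : ℝ) ^ n := by rw [mul_sum]
    _ ≤ 513 * (ε⁻¹ ^ 2 * L) * (2 * 2 ^ i) := by gcongr
    _ = 1026 * ε⁻¹ ^ 2 * 2 ^ i * L := by ring

lemma ncard_net_le (M : Matrix (Fin N) (Fin N) ℂ) (hN : 2 ≤ N) {ε L : ℝ}
    (hX : 1 ≤ ε⁻¹ ^ 2 * L) (i : ℕ) :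
    ((net M (sampleSize ε L) i).ncard : ℝ) ≤ (N : ℝ) ^ (5000 * ε⁻¹ ^ 2 * 2 ^ i * L) := by
  set S := ∑ n ∈ range (i + 1), sampleSize ε L n
  have h5N : N * 5 ≤ N ^ 4 := by nlinarith [Nat.mul_le_mul hN hN]
  have hnat : (net M (sampleSize ε L) i).ncard ≤ N ^ (4 * S) :=
    (net_finite_and_ncard_le M _ i).2.trans (by rw [pow_mul]; exact Nat.pow_le_pow_left h5N S)
  have hS : (4 * S : ℝ) ≤ 5000 * ε⁻¹ ^ 2 * 2 ^ i * L := by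
    have := sum_sampleSize_le hX i
    push_cast [S]
    nlinarith [mul_nonneg (zero_le_one.trans hX) (pow_nonneg zero_le_two i)]
  calc ((net M (sampleSize ε L) i).ncard : ℝ) ≤ ((N ^ (4 * S) : ℕ) : ℝ) := by exact_mod_cast hnat
    _ = (N : ℝ) ^ ((4 * S : ℕ) : ℝ) := by rw [Real.rpow_natCast]; push_cast; ring
    _ ≤ (N : ℝ) ^ (5000 * ε⁻¹ ^ 2 * 2 ^ i * L) :=
        Real.rpow_le_rpow_of_exponent_le (by exact_mod_cast (by omega : 1 ≤ N))
          (by exact_mod_cast hS)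

end Net

section Approximation

variable {N : ℕ} {M : Matrix (Fin N) (Fin N) ℂ} {x : Fin N → ℂ}

/-- A probability vector when `‖x‖₁ = 1`, under which `columnAtom M j` has mean `(Mx)_j / 2`. -/
def signWeight (x : Fin N → ℂ) (a : Fin N × Fin 5) : ℝ := phaseWeight (x a.1) a.2 / 2

lemma signWeight_nonneg (x : Fin N → ℂ) (a : Fin N × Fin 5) : 0 ≤ signWeight x a :=
  div_nonneg (phaseWeight_nonneg _ _) zero_le_two

lemma sum_signWeight (hx : ∑ l, ‖x l‖ = 1) : ∑ a, signWeight x a = 1 := by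
  simp only [signWeight, Fintype.sum_prod_type, ← sum_div, sum_phaseWeight, ← mul_sum, hx]
  norm_num

lemma sum_signWeight_mul_columnAtom (M : Matrix (Fin N) (Fin N) ℂ) (x : Fin N → ℂ) (j : Fin N) :
    ∑ a, (signWeight x a : ℂ) * columnAtom M j a = M.mulVec x j / 2 := by
  simp only [signWeight, columnAtom, Fintype.sum_prod_type, Matrix.mulVec, dotProduct, sum_div]
  refine sum_congr rfl fun l _ => ?_
  simp only [Complex.ofReal_div, Complex.ofReal_ofNat, ← mul_assoc, div_mul_eq_mul_div, ← sum_div,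
    ← sum_mul, sum_phaseWeight_mul_phase]
  ring

lemma norm_mulVec_le_one (hM : ∀ j l, ‖M j l‖ ≤ 1) (hx : ∑ l, ‖x l‖ = 1) (j : Fin N) :
    ‖M.mulVec x j‖ ≤ 1 := by
  simp only [Matrix.mulVec, dotProduct]
  refine (norm_sum_le _ _).trans ?_
  rw [← hx]
  exact sum_le_sum fun l _ => by
    rw [norm_mul]; exact mul_le_of_le_one_left (norm_nonneg _) (hM j l)

lemma abs_norm_netPoint_sub_le {k : ℕ} (ω : Fin k → Fin N × Fin 5) (j : Fin N) :
    |‖netPoint M ω j‖ - ‖M.mulVec x j‖| ≤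
      2 * ‖sampleAvg (columnAtom M j) ω - ∑ a, (signWeight x a : ℂ) * columnAtom M j a‖ := by
  refine (abs_norm_sub_norm_le _ _).trans (le_of_eq ?_)
  rw [sum_signWeight_mul_columnAtom, netPoint, ← Complex.norm_two, ← norm_mul, mul_sub,
    mul_div_cancel₀ _ two_ne_zero]

lemma norm_columnAtom_le (hM : ∀ j l, ‖M j l‖ ≤ 1) (j : Fin N) (a : Fin N × Fin 5) :
    ‖columnAtom M j a‖ ≤ 1 := by
  rw [columnAtom, norm_mul]
  exact mul_le_one₀ (norm_phase_le_one _) (norm_nonneg _) (hM _ _)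

lemma ite_one_zero_le_ite_one_zero {p q : Prop} [Decidable p] [Decidable q] (h : p → q) :
    (if p then (1 : ℝ) else 0) ≤ if q then 1 else 0 := by
  by_cases hp : p
  · rw [if_pos hp, if_pos (h hp)]
  · rw [if_neg hp]
    split_ifs <;> norm_num

lemma exists_sample_weighted_bad_le (hM : ∀ j l, ‖M j l‖ ≤ 1) (hx : ∑ l, ‖x l‖ = 1) {k : ℕ}
    (hk : 0 < k) {c : Fin N → ℝ} (hc : ∀ j, 0 ≤ c j) {τ : ℝ} (hτ0 : 0 ≤ τ) (hτ2 : τ ≤ 2) :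
    ∃ ω : Fin k → Fin N × Fin 5,
      ∑ j, c j * (if τ ≤ |‖netPoint M ω j‖ - ‖M.mulVec x j‖| then 1 else 0) ≤
        (∑ j, c j) * (4 * Real.exp (-(k * τ ^ 2) / 256)) := by
  refine exists_le_of_sampleMean_le (signWeight_nonneg x) (sum_signWeight hx) ?_
  rw [sampleMean_sum, sum_mul]
  refine sum_le_sum fun j _ => ?_
  rw [sampleMean_const_mul]
  refine mul_le_mul_of_nonneg_left ?_ (hc j)
  have hchernoff := sampleMean_indicator_le_norm_sampleAvg_sub_le (signWeight_nonneg x)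
    (sum_signWeight hx) hk (norm_columnAtom_le hM j) (σ := τ / 2) (by positivity) (by linarith)
  refine le_trans (sampleMean_mono (signWeight_nonneg x) fun ω =>
    ite_one_zero_le_ite_one_zero fun h => ?_) (hchernoff.trans (le_of_eq ?_))
  · linarith [abs_norm_netPoint_sub_le (M := M) (x := x) ω j]
  · congr 2
    ring

lemma exp_neg_sampleSize_mul_le {ε : ℝ} (L : ℝ) (hε : 0 < ε) (n : ℕ) :
    Real.exp (-(sampleSize ε L n * (ε * scale n) ^ 2) / 256) ≤ Real.exp (-(2 * L)) := by
  have hk : 512 * ε⁻¹ ^ 2 * 2 ^ n * L ≤ sampleSize ε L n := Nat.le_ceil _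
  have hσ : (ε * scale n) ^ 2 = ε ^ 2 * (1 / 2) ^ n := by rw [mul_pow, scale_sq]
  have hprod : 512 * ε⁻¹ ^ 2 * 2 ^ n * L * (ε * scale n) ^ 2 = 512 * L := by
    calc 512 * ε⁻¹ ^ 2 * 2 ^ n * L * (ε * scale n) ^ 2
        = 512 * L * (ε⁻¹ * ε) ^ 2 * (2 ^ n * (1 / 2) ^ n) := by rw [hσ]; ring
      _ = 512 * L := by rw [← mul_pow, inv_mul_cancel₀ hε.ne']; norm_num
  refine Real.exp_le_exp.2 ?_
  nlinarith [mul_le_mul_of_nonneg_right hk (sq_nonneg (ε * scale n))]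

lemma exists_sample_approx (hM : ∀ j l, ‖M j l‖ ≤ 1) (hx : ∑ l, ‖x l‖ = 1) {ε η γ : ℝ}
    {t : ℕ} (hε : 0 < ε) (hε₀ : ε ≤ 1 / 100) (ht : 1 ≤ t) (hη : (1 / 2) ^ t ≤ η) (hγ : 0 < γ)
    (hγη : 72 * t * γ ^ 2 ≤ η) (hL : 0 < Real.log (1 / γ)) {c : Fin N → ℝ}
    (hc0 : ∀ j, 0 ≤ c j) (hc : ∑ j, c j ≤ 2) :
    ∃ ω : ∀ n, Fin (sampleSize ε (Real.log (1 / γ)) n) → Fin N × Fin 5,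
      ∀ w : Fin N → ℝ, (∀ j, 0 ≤ w j) → ∑ j, w j = 1 → (∀ j, w j ≤ c j) →
        |∑ j, w j * ‖M.mulVec x j‖ ^ 2 -
            ∑ j, w j * ∑ n ∈ Icc 1 t, netProfile M _ ω n j| ≤
          3 * ε * ∑ j, w j * ‖M.mulVec x j‖ ^ 2 + 10 * η := by
  set L := Real.log (1 / γ)
  have hexp : Real.exp (-(2 * L)) = γ ^ 2 := by
    have : -(2 * Real.log (1 / γ)) = Real.log (γ ^ 2) := by
      rw [Real.log_pow, one_div, Real.log_inv]
      push_cast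
      ring
    rw [this, Real.exp_log (pow_pos hγ 2)]
  choose ω hω using fun n => exists_sample_weighted_bad_le hM hx (sampleSize_pos hε hL n) hc0
    (τ := ε * scale n) (mul_pos hε (scale_pos n)).le
    (by nlinarith [scale_le_one n, scale_pos n])
  refine ⟨ω, fun w hw0 hw1 hwc => ?_⟩
  have hbad : ∀ n, ∑ j, w j *
      (if ε * scale n ≤ |‖netPoint M (ω n) j‖ - ‖M.mulVec x j‖| then 1 else 0) ≤ 8 * γ ^ 2 := by
    intro n
    refine (sum_le_sum fun j _ => mul_le_mul_of_nonneg_right (hwc j) ?_).trans ((hω n).trans ?_)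
    · split_ifs <;> norm_num
    · rw [← hexp]
      have := exp_neg_sampleSize_mul_le L hε n
      nlinarith [Real.exp_pos (-(sampleSize ε L n * (ε * scale n) ^ 2) / 256),
        sum_nonneg fun j (_ : j ∈ univ) => hc0 j]
  refine (abs_weighted_sum_sub_le (A := fun j n => ‖netPoint M (ω n) j‖) hw0 hw1
    (fun j => norm_nonneg _) (norm_mulVec_le_one hM hx) ht hη hε hε₀).trans ?_
  have := sum_le_sum fun n (_ : n ∈ Icc 1 t) => hbad n
  rw [sum_const, Nat.card_Icc, add_tsub_cancel_right, nsmul_eq_mul] at this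
  linarith

end Approximation

section Averages

variable {N : ℕ}

lemma multiset_avg_eq_sum (Q : Multiset (Fin N)) (f : Fin N → ℝ) :
    1 / (Q.card : ℝ) * (Q.map f).sum = ∑ j, (Q.count j : ℝ) / Q.card * f j := by
  classical
  rw [sum_multiset_map_count, mul_sum, sum_subset (subset_univ _) fun j _ hj => by
    rw [Multiset.count_eq_zero.2 (by simpa using hj), zero_smul, mul_zero]]
  exact sum_congr rfl fun j _ => by rw [nsmul_eq_mul]; ring

/-- Dominates the weights of both the average over `Q` and the average over `[N]`. -/
def avgWeight (Q : Multiset (Fin N)) (j : Fin N) : ℝ := Q.count j / Q.card + 1 / N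

lemma avgWeight_nonneg (Q : Multiset (Fin N)) (j : Fin N) : 0 ≤ avgWeight Q j := by
  unfold avgWeight; positivity

lemma sum_count_div_card {Q : Multiset (Fin N)} (hQ : Q ≠ 0) :
    ∑ j, (Q.count j : ℝ) / Q.card = 1 := by
  classical
  rw [← sum_div, div_eq_one_iff_eq (Nat.cast_ne_zero.2 (Multiset.card_pos.2 hQ).ne')]
  exact_mod_cast Multiset.sum_count_eq_card fun j _ => mem_univ j

lemma sum_one_div_card (hN : N ≠ 0) : ∑ _j : Fin N, (1 : ℝ) / N = 1 := by
  rw [sum_const, card_univ, Fintype.card_fin, nsmul_eq_mul,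
    mul_one_div_cancel (Nat.cast_ne_zero.2 hN)]

lemma sum_avgWeight (hN : N ≠ 0) {Q : Multiset (Fin N)} (hQ : Q ≠ 0) :
    ∑ j, avgWeight Q j = 2 := by
  simp only [avgWeight, sum_add_distrib, sum_count_div_card hQ, sum_one_div_card hN]
  norm_num

lemma averages_mem_Icc (hN : N ≠ 0) {Q : Multiset (Fin N)} (hQ : Q ≠ 0) {Y S : Fin N → ℝ}
    (hS : ∀ j, 0 ≤ S j) {ε η : ℝ} (hε : 0 ≤ ε) (hε₀ : ε ≤ 1 / 100) (hη : 0 ≤ η)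
    (h : ∀ w : Fin N → ℝ, (∀ j, 0 ≤ w j) → ∑ j, w j = 1 → (∀ j, w j ≤ avgWeight Q j) →
      |∑ j, w j * Y j - ∑ j, w j * S j| ≤ 3 * ε * ∑ j, w j * Y j + 10 * η) :
    1 / (Q.card : ℝ) * (Q.map Y).sum ∈
        Set.Icc ((1 - 4 * ε) * (1 / (Q.card : ℝ) * (Q.map S).sum) - 11 * η)
          ((1 + 4 * ε) * (1 / (Q.card : ℝ) * (Q.map S).sum) + 11 * η) ∧
      1 / (N : ℝ) * ∑ j, Y j ∈
        Set.Icc ((1 - 4 * ε) * (1 / (N : ℝ) * ∑ j, S j) - 11 * η)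
          ((1 + 4 * ε) * (1 / (N : ℝ) * ∑ j, S j) + 11 * η) := by
  have hmem : ∀ w : Fin N → ℝ, (∀ j, 0 ≤ w j) → ∑ j, w j = 1 → (∀ j, w j ≤ avgWeight Q j) →
      ∑ j, w j * Y j ∈ Set.Icc ((1 - 4 * ε) * ∑ j, w j * S j - 11 * η)
        ((1 + 4 * ε) * ∑ j, w j * S j + 11 * η) := fun w hw0 hw1 hwc =>
    mem_Icc_of_abs_sub_le (sum_nonneg fun j _ => mul_nonneg (hw0 j) (hS j)) hε hε₀ hη
      (h w hw0 hw1 hwc)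
  constructor
  · simp only [multiset_avg_eq_sum]
    exact hmem _ (fun j => by positivity) (sum_count_div_card hQ)
      fun j => le_add_of_nonneg_right (by positivity)
  · rw [mul_sum univ Y, mul_sum univ S]
    exact hmem _ (fun j => by positivity) (sum_one_div_card hN)
      fun j => le_add_of_nonneg_left (by positivity)

end Averages

lemma norm_le_one_of_iSup_eq_one {N : ℕ} {M : Matrix (Fin N) (Fin N) ℂ}
    (hM : (⨆ p : Fin N × Fin N, ‖M p.1 p.2‖) = 1) (j l : Fin N) : ‖M j l‖ ≤ 1 :=
  hM ▸ le_ciSup (f := fun p : Fin N × Fin N => ‖M p.1 p.2‖) (Set.finite_range _).bddAbove (j, l)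

lemma norm_mulVec_eq_one_of_dim_one {M : Matrix (Fin 1) (Fin 1) ℂ}
    (hM : (⨆ p : Fin 1 × Fin 1, ‖M p.1 p.2‖) = 1) {x : Fin 1 → ℂ} (hx : ∑ l, ‖x l‖ = 1)
    (j : Fin 1) : ‖M.mulVec x j‖ = 1 := by
  rw [ciSup_subsingleton (0, 0)] at hM
  simp_all [Matrix.mulVec, dotProduct, Subsingleton.elim j 0]

lemma abs_weighted_sum_sub_le_of_dim_one {M : Matrix (Fin 1) (Fin 1) ℂ}
    (hM : (⨆ p : Fin 1 × Fin 1, ‖M p.1 p.2‖) = 1) {x : Fin 1 → ℂ} (hx : ∑ l, ‖x l‖ = 1)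
    {t : ℕ} {ε η : ℝ} (ht : 1 ≤ t) (hη : (1 / 2) ^ t ≤ η) (hε : 0 < ε) (hε₀ : ε ≤ 1 / 100)
    {w : Fin 1 → ℝ} (hw0 : ∀ j, 0 ≤ w j) (hw1 : ∑ j, w j = 1) :
    |∑ j, w j * ‖M.mulVec x j‖ ^ 2 - ∑ j, w j * ∑ n ∈ Icc 1 t, scaleComponent (fun _ => 1) n| ≤
      3 * ε * ∑ j, w j * ‖M.mulVec x j‖ ^ 2 + 10 * η := by
  have := abs_weighted_sum_sub_le (A := fun _ _ => 1) (Y := fun _ => 1) hw0 hw1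
    (fun _ => zero_le_one) (fun _ => le_rfl) ht hη hε hε₀
  simp only [norm_mulVec_eq_one_of_dim_one hM hx, sub_self, abs_zero,
    fun n => not_le.2 (mul_pos hε (scale_pos n)), if_false, mul_zero, sum_const_zero] at this ⊢
  linarith [(pow_pos one_half_pos t).le.trans hη]

lemma one_le_ceil_logb_and_half_pow_le {η : ℝ} (hη0 : 0 < η) (hη1 : η < 1) :
    1 ≤ ⌈Real.logb 2 (1 / η)⌉₊ ∧ (1 / 2 : ℝ) ^ ⌈Real.logb 2 (1 / η)⌉₊ ≤ η := by
  refine ⟨Nat.one_le_ceil_iff.2 (Real.logb_pos one_lt_two ((one_lt_div hη0).2 hη1)), ?_⟩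
  have h := (Real.logb_le_iff_le_rpow one_lt_two (by positivity)).1
    (Nat.le_ceil (Real.logb 2 (1 / η)))
  rw [Real.rpow_natCast, div_le_iff₀ hη0] at h
  rw [div_pow, one_pow, div_le_iff₀ (by positivity)]
  linarith

lemma div_two_mul_bounds {ε η : ℝ} {t : ℕ} (hη0 : 0 < η) (hηε : η ≤ ε) (hε₀ : ε ≤ 1 / 100)
    (ht : 1 ≤ t) :
    0 < η / (2 * t) ∧ 72 * t * (η / (2 * t)) ^ 2 ≤ η ∧ 0 < Real.log (1 / (η / (2 * t))) ∧
      1 ≤ ε⁻¹ ^ 2 * Real.log (1 / (η / (2 * t))) := by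
  have ht1 : (1 : ℝ) ≤ t := Nat.one_le_cast.2 ht
  have hγ : 0 < η / (2 * t) := by positivity
  have hγ2 : η / (2 * t) ≤ 1 / 2 := by
    rw [div_le_iff₀ (by positivity)]; nlinarith
  have hlog : Real.log 2 ≤ Real.log (1 / (η / (2 * t))) :=
    Real.log_le_log two_pos (by rw [le_one_div two_pos hγ]; exact hγ2)
  have hinv : 100 ≤ ε⁻¹ := by
    rw [le_inv_comm₀ (by norm_num) (hη0.trans_le hηε)]; linarith
  refine ⟨hγ, ?_, (Real.log_pos one_lt_two).trans_le hlog, ?_⟩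
  · rw [div_pow, mul_pow]
    field_simp
    nlinarith
  · nlinarith [Real.log_two_gt_d9]

end

/-- Multi-scale net decomposition (Lemma 3.5 of Haviv–Regev): there are small nets
`H_i` of nonnegative vectors bounded by `9·2⁻ⁱ` such that for every multiset `Q` and every
`x` with `‖x‖₁ = 1`, the averages of `|Mx|²` over `Q` and over `[N]` are both approximated,
up to multiplicative factor `1 ± O(ε)` and additive error `O(η)`, by the corresponding
averages of `∑ᵢ h⁽ⁱ⁾` with `h⁽ⁱ⁾ ∈ H_i`. -/
theorem multiscale_net_decomposition :
    ∃ C₁ C₂ C₃ ε₀ : ℝ, 0 < C₁ ∧ 0 < C₂ ∧ 0 < C₃ ∧ 0 < ε₀ ∧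
      ∀ (N : ℕ), 1 ≤ N →
      ∀ (M : Matrix (Fin N) (Fin N) ℂ),
        (⨆ p : Fin N × Fin N, ‖M p.1 p.2‖) = 1 →
      ∀ ε η : ℝ, 0 < η → η ≤ ε → ε ≤ ε₀ →
      letI t : ℕ := ⌈Real.logb 2 (1 / η)⌉₊
      letI γ : ℝ := η / (2 * t)
      ∃ H : ℕ → Set (Fin N → ℝ),
        (∀ i ∈ Finset.Icc 1 t, (H i).Finite ∧
          ((H i).ncard : ℝ) ≤ (N : ℝ) ^ (C₃ * ε⁻¹ ^ 2 * 2 ^ i * Real.log (1 / γ))) ∧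
        ∀ (Q : Multiset (Fin N)), Q ≠ 0 →
        ∀ (x : Fin N → ℂ), (∑ ℓ, ‖x ℓ‖) = 1 →
          ∃ h : ℕ → Fin N → ℝ,
            (∀ i ∈ Finset.Icc 1 t, h i ∈ H i ∧
              ∀ j, 0 ≤ h i j ∧ h i j ≤ 9 / 2 ^ i) ∧
            ((1 / Q.card : ℝ) *
                (Q.map (fun j => ‖M.mulVec x j‖ ^ 2)).sum ∈
              Set.Icc
                ((1 - C₁ * ε) * ((1 / Q.card : ℝ) *
                    (Q.map (fun j => ∑ i ∈ Finset.Icc 1 t, h i j)).sum) - C₂ * η)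
                ((1 + C₁ * ε) * ((1 / Q.card : ℝ) *
                    (Q.map (fun j => ∑ i ∈ Finset.Icc 1 t, h i j)).sum) + C₂ * η)) ∧
            ((1 / N : ℝ) * ∑ j, ‖M.mulVec x j‖ ^ 2 ∈
              Set.Icc
                ((1 - C₁ * ε) * ((1 / N : ℝ) *
                    ∑ j, ∑ i ∈ Finset.Icc 1 t, h i j) - C₂ * η)
                ((1 + C₁ * ε) * ((1 / N : ℝ) *
                    ∑ j, ∑ i ∈ Finset.Icc 1 t, h i j) + C₂ * η)) := by
  refine ⟨4, 11, 5000, 1 / 100, by norm_num, by norm_num, by norm_num, by norm_num, ?_⟩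
  intro N hN M hM ε η hη hηε hε₀
  set t := ⌈Real.logb 2 (1 / η)⌉₊
  set γ := η / (2 * (t : ℝ))
  have hε : 0 < ε := hη.trans_le hηε
  obtain ⟨ht, htη⟩ := one_le_ceil_logb_and_half_pow_le hη (by linarith)
  obtain ⟨hγ, hγη, hL, hX⟩ := div_two_mul_bounds hη hηε hε₀ ht
  obtain rfl | hN2 : N = 1 ∨ 2 ≤ N := by omega
  · -- for `N = 1` every admissible `x` has `|Mx| = 1`, so a single profile serves all of them
    exact ⟨fun i => {fun _ => scaleComponent (fun _ => 1) i},
      fun i _ => ⟨Set.finite_singleton _, by simp⟩, fun Q hQ x hx =>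
      ⟨fun i _ => scaleComponent (fun _ => 1) i,
        fun i _ => ⟨rfl, fun _ => ⟨scaleComponent_nonneg _ _, scaleComponent_le _ _⟩⟩,
        averages_mem_Icc one_ne_zero hQ
          (fun _ => sum_nonneg fun _ _ => scaleComponent_nonneg _ _) hε.le hε₀ hη.le
          fun _ hw0 hw1 _ => abs_weighted_sum_sub_le_of_dim_one hM hx ht htη hε hε₀ hw0 hw1⟩⟩
  · refine ⟨net M (sampleSize ε (Real.log (1 / γ))),
      fun i _ => ⟨(net_finite_and_ncard_le M _ i).1, ncard_net_le M hN2 hX i⟩, fun Q hQ x hx => ?_⟩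
    obtain ⟨ω, hω⟩ := exists_sample_approx (norm_le_one_of_iSup_eq_one hM) hx hε hε₀ ht htη hγ
      hγη hL (avgWeight_nonneg Q) (sum_avgWeight (by omega) hQ).le
    exact ⟨fun i => netProfile M _ ω i,
      fun i _ => ⟨⟨ω, rfl⟩, fun j => ⟨scaleComponent_nonneg _ _, scaleComponent_le _ _⟩⟩,
      averages_mem_Icc (by omega) hQ
        (fun _ => sum_nonneg fun _ _ => scaleComponent_nonneg _ _) hε.le hε₀ hη.le hω⟩
end
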